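/- arXiv:1801.07817 — 2 statements merged into one kernel-verified Lean document; each statement's English description precedes it below -/
import Mathlib

section
/- Let W ⊆ ℝ^m × ℝ^d be open and g : W → ℝ continuous such that for each i ∈ {1, …, d} the partial derivative ∂g/∂x_i exists and is continuous on W, with mollifications g_{n₁,n₂} as defined in the context. Then for every (λ, x) ∈ W and every i ∈ {1, …, d} there exists N ∈ ℕ such that for each n₂ ≥ N the inner limit lim_{n₁→∞} ∂g_{n₁,n₂}/∂x_i(λ, x) exists, and lim_{n₂→∞} lim_{n₁→∞} ∂g_{n₁,n₂}/∂x_i(λ, x) = ∂g/∂x_i(λ, x). (Lemma A.1(iv) of the paper.) -/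
/-!
Once both mollification radii are below the radius `ρ` of a closed ball around `(λ, x)` inside
`W`, the integrand near `(λ, x)` only sees values of `g` on that compact ball, where `g` and
`∂g/∂x_i` are bounded. Writing the iterated integral as one integral over the product space and
differentiating under the integral sign shows that `∂g_{n₁,n₂}/∂x_i(λ, x)` is the mollification of
`∂g/∂x_i` itself. The inner limit `n₁ → ∞` then follows by dominated convergence from the
approximate-identity property of `η_{n₁}` at the points `(λ, x - y)` where `∂g/∂x_i` is continuous,
and the outer limit `n₂ → ∞` is that property once more, at `(λ, x)`.
-/

open MeasureTheory Filter Topology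

/-- The mollifier `η_n^{(l)}` on `ℝ^l`: `η_n(z) = β_l n^l exp(1/(n²‖z‖² − 1))` for
`‖z‖ < 1/n` and `0` otherwise, with `β_l = (∫_{‖y‖<1} exp(1/(‖y‖² − 1)) dy)⁻¹`. -/
noncomputable def mollifier (l n : ℕ) (z : EuclideanSpace ℝ (Fin l)) : ℝ :=
  if ‖z‖ < 1 / n then
    (∫ y : EuclideanSpace ℝ (Fin l),
        if ‖y‖ < 1 then Real.exp (1 / (‖y‖ ^ 2 - 1)) else 0)⁻¹
      * (n : ℝ) ^ l * Real.exp (1 / ((n : ℝ) ^ 2 * ‖z‖ ^ 2 - 1))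
  else 0

/-- The mollification `g_{n₁,n₂}(λ, x) = ∫ η_{n₂}(y) ∫ η_{n₁}(u) ḡ(λ−u, x−y) du dy`,
where `ḡ` is the extension of `g` by `0` off `W` (the Bochner integral is `0` whenever
the integrand is not integrable). -/
noncomputable def mollification {m d : ℕ}
    (W : Set (EuclideanSpace ℝ (Fin m) × EuclideanSpace ℝ (Fin d)))
    (g : EuclideanSpace ℝ (Fin m) × EuclideanSpace ℝ (Fin d) → ℝ)
    (n₁ n₂ : ℕ) (p : EuclideanSpace ℝ (Fin m) × EuclideanSpace ℝ (Fin d)) : ℝ :=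
  ∫ y : EuclideanSpace ℝ (Fin d), mollifier d n₂ y *
    ∫ u : EuclideanSpace ℝ (Fin m), mollifier m n₁ u *
      Set.indicator W g (p.1 - u, p.2 - y)

open Metric

noncomputable def bumpProfile (l : ℕ) (y : EuclideanSpace ℝ (Fin l)) : ℝ :=
  if ‖y‖ < 1 then Real.exp (1 / (‖y‖ ^ 2 - 1)) else 0

lemma bumpProfile_nonneg (l : ℕ) (y : EuclideanSpace ℝ (Fin l)) : 0 ≤ bumpProfile l y := by
  unfold bumpProfile; split_ifs <;> positivity

lemma measurable_bumpProfile (l : ℕ) : Measurable (bumpProfile l) :=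
  Measurable.ite (measurableSet_lt measurable_norm measurable_const)
    (measurable_const.div ((measurable_norm.pow_const 2).sub measurable_const)).exp
    measurable_const

lemma support_bumpProfile (l : ℕ) :
    Function.support (bumpProfile l) = ball (0 : EuclideanSpace ℝ (Fin l)) 1 := by
  ext y
  simp [bumpProfile, Real.exp_ne_zero]

lemma integrable_bumpProfile (l : ℕ) : Integrable (bumpProfile l) := by
  have hle : ∀ y, ‖bumpProfile l y‖ ≤ 1 := fun y => by
    rw [Real.norm_of_nonneg (bumpProfile_nonneg l y), bumpProfile]
    split_ifs with hy
    · refine Real.exp_le_one_iff.2 (div_nonpos_of_nonneg_of_nonpos zero_le_one ?_)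
      nlinarith [norm_nonneg y]
    · exact zero_le_one
  rw [← Set.indicator_eq_self.2 (support_bumpProfile l).le,
    integrable_indicator_iff measurableSet_ball]
  exact Measure.integrableOn_of_bounded measure_ball_lt_top.ne
    (measurable_bumpProfile l).aestronglyMeasurable (ae_of_all _ hle)

lemma integral_bumpProfile_pos (l : ℕ) : 0 < ∫ y, bumpProfile l y := by
  rw [integral_pos_iff_support_of_nonneg (bumpProfile_nonneg l) (integrable_bumpProfile l),
    support_bumpProfile]
  exact measure_ball_pos _ _ zero_lt_one

lemma mollifier_eq_bumpProfile {l n : ℕ} (hn : n ≠ 0) (z : EuclideanSpace ℝ (Fin l)) :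
    mollifier l n z = (∫ y, bumpProfile l y)⁻¹ * (n : ℝ) ^ l * bumpProfile l ((n : ℝ) • z) := by
  have hn' : (0 : ℝ) < n := by positivity
  have hnorm : ‖(n : ℝ) • z‖ = n * ‖z‖ := by rw [norm_smul, Real.norm_of_nonneg hn'.le]
  have hball : ‖z‖ < 1 / n ↔ ‖(n : ℝ) • z‖ < 1 := by
    rw [hnorm, lt_div_iff₀ hn', mul_comm]
  unfold mollifier bumpProfile
  by_cases hz : ‖z‖ < 1 / n
  · rw [if_pos hz, if_pos (hball.1 hz), hnorm, mul_pow]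
  · rw [if_neg hz, if_neg (mt hball.2 hz), mul_zero]

lemma mollifier_zero_right (l : ℕ) : mollifier l 0 = 0 := by
  ext z
  exact if_neg (by simp)

lemma mollifier_nonneg (l n : ℕ) (z : EuclideanSpace ℝ (Fin l)) : 0 ≤ mollifier l n z := by
  rcases eq_or_ne n 0 with rfl | hn
  · rw [mollifier_zero_right, Pi.zero_apply]
  · rw [mollifier_eq_bumpProfile hn]
    exact mul_nonneg (mul_nonneg (inv_nonneg.2 (integral_bumpProfile_pos l).le) (by positivity))
      (bumpProfile_nonneg l _)

lemma measurable_mollifier (l n : ℕ) : Measurable (mollifier l n) :=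
  Measurable.ite (measurableSet_lt measurable_norm measurable_const)
    ((measurable_const.div (((measurable_norm.pow_const 2).const_mul _).sub
      measurable_const)).exp.const_mul _) measurable_const

lemma integrable_mollifier (l n : ℕ) : Integrable (mollifier l n) := by
  rcases eq_or_ne n 0 with rfl | hn
  · rw [mollifier_zero_right]
    exact integrable_zero _ _ _
  · rw [funext (mollifier_eq_bumpProfile hn)]
    exact ((integrable_bumpProfile l).comp_smul (Nat.cast_ne_zero.2 hn)).const_mul _

lemma integral_mollifier (l : ℕ) {n : ℕ} (hn : n ≠ 0) : ∫ z, mollifier l n z = 1 := by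
  simp_rw [mollifier_eq_bumpProfile hn, mul_assoc]
  rw [integral_const_mul, integral_const_mul, Measure.integral_comp_smul,
    finrank_euclideanSpace_fin, smul_eq_mul, abs_of_nonneg (by positivity)]
  have := (integral_bumpProfile_pos l).ne'
  have : (n : ℝ) ^ l ≠ 0 := by positivity
  field_simp

lemma norm_lt_of_mollifier_ne_zero {l n : ℕ} {z : EuclideanSpace ℝ (Fin l)}
    (h : mollifier l n z ≠ 0) : ‖z‖ < 1 / n := by
  by_contra hz
  exact h (if_neg hz)

lemma tendsto_support_mollifier (l : ℕ) :
    Tendsto (fun n => Function.support (mollifier l n)) atTop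
      (𝓝 (0 : EuclideanSpace ℝ (Fin l))).smallSets := by
  rw [tendsto_smallSets_iff]
  intro s hs
  obtain ⟨r, hr, hball⟩ := Metric.mem_nhds_iff.1 hs
  filter_upwards [tendsto_one_div_atTop_nhds_zero_nat.eventually_lt_const hr] with n hn z hz
  exact hball (mem_ball_zero_iff.2 ((norm_lt_of_mollifier_ne_zero hz).trans hn))

lemma tendsto_integral_mollifier_mul_comp_sub {l : ℕ} {f : EuclideanSpace ℝ (Fin l) → ℝ}
    (hf : AEStronglyMeasurable f) {x₀ : EuclideanSpace ℝ (Fin l)} (hfx₀ : ContinuousAt f x₀) :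
    Tendsto (fun n => ∫ u, mollifier l n u * f (x₀ - u)) atTop (𝓝 (f x₀)) := by
  have := convolution_tendsto_right (μ := volume) (φ := mollifier l) (g := fun _ => f)
    (k := fun _ => x₀) (Eventually.of_forall (mollifier_nonneg l))
    (eventually_atTop.2 ⟨1, fun _ hn => integral_mollifier l (by omega)⟩)
    (tendsto_support_mollifier l) (Eventually.of_forall fun _ => hf)
    (Tendsto.comp hfx₀ tendsto_snd) tendsto_const_nhds
  simpa only [convolution_def, ContinuousLinearMap.lsmul_apply, smul_eq_mul] using this

lemma norm_mul_le_of_ne_zero {a b C : ℝ} (h : a ≠ 0 → ‖b‖ ≤ C) : ‖a * b‖ ≤ ‖a‖ * C := by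
  rcases eq_or_ne a 0 with rfl | ha
  · simp
  · rw [norm_mul]
    exact mul_le_mul_of_nonneg_left (h ha) (norm_nonneg a)

lemma norm_integral_mollifier_mul_le {l n : ℕ} (hn : n ≠ 0) {h : EuclideanSpace ℝ (Fin l) → ℝ}
    {C : ℝ} (hC : ∀ u, mollifier l n u ≠ 0 → ‖h u‖ ≤ C) :
    ‖∫ u, mollifier l n u * h u‖ ≤ C := by
  have hle := norm_integral_le_of_norm_le ((integrable_mollifier l n).mul_const C)
    (ae_of_all _ fun u => (norm_mul_le_of_ne_zero (hC u)).trans_eq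
      (by rw [Real.norm_of_nonneg (mollifier_nonneg l n u)]))
  rwa [integral_mul_const, integral_mollifier l hn, one_mul] at hle

lemma ContinuousOn.measurable_indicator {α : Type*} [TopologicalSpace α] [MeasurableSpace α]
    [OpensMeasurableSpace α] {W : Set α} {f : α → ℝ} (hf : ContinuousOn f W) (hW : IsOpen W) :
    Measurable (W.indicator f) := by
  classical
  rw [← Set.piecewise_eq_indicator]
  exact hf.measurable_piecewise continuousOn_const hW.measurableSet

lemma ContinuousOn.continuousAt_indicator_of_isOpen {α : Type*} [TopologicalSpace α]
    {W : Set α} {f : α → ℝ} (hf : ContinuousOn f W) (hW : IsOpen W) {x : α} (hx : x ∈ W) :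
    ContinuousAt (W.indicator f) x :=
  (hW.interior_eq.symm ▸ hf).continuousAt_indicator fun hfr =>
    hfr.2 (hW.interior_eq.symm ▸ hx)

lemma hasDerivAt_indicator_line {X Y : Type*} [NormedAddCommGroup X] [NormedAddCommGroup Y]
    [NormedSpace ℝ Y] {W : Set (X × Y)} (hW : IsOpen W) {g g' : X × Y → ℝ} {v : Y}
    (hgv : ∀ q ∈ W, HasDerivAt (fun t : ℝ => g (q.1, q.2 + t • v)) (g' q) 0)
    {q : X × Y} {t : ℝ} (hq : (q.1, q.2 + t • v) ∈ W) :
    HasDerivAt (fun s : ℝ => W.indicator g (q.1, q.2 + s • v))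
      (W.indicator g' (q.1, q.2 + t • v)) t := by
  have hline : HasDerivAt (fun s : ℝ => g (q.1, q.2 + t • v + (s - t) • v))
      (g' (q.1, q.2 + t • v)) t :=
    HasDerivAt.comp_sub_const t t (by simpa only [sub_self] using hgv _ hq)
  have hshift : ∀ s : ℝ, q.2 + t • v + (s - t) • v = q.2 + s • v := fun s => by
    rw [sub_smul]; abel
  simp only [hshift] at hline
  rw [Set.indicator_of_mem hq]
  refine hline.congr_of_eventuallyEq ?_
  have hcont : Continuous fun s : ℝ => (q.1, q.2 + s • v) := by fun_prop
  filter_upwards [hcont.continuousAt.preimage_mem_nhds (hW.mem_nhds hq)] with s hs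
  exact Set.indicator_of_mem (Set.mem_preimage.1 hs) g

lemma Integrable.mul_of_norm_le_of_ne_zero {α : Type*} [MeasurableSpace α] {μ : Measure α}
    {f h : α → ℝ} (hf : Integrable f μ) (hh : AEStronglyMeasurable h μ) {C : ℝ}
    (hC : ∀ x, f x ≠ 0 → ‖h x‖ ≤ C) : Integrable (fun x => f x * h x) μ :=
  (hf.norm.mul_const C).mono' (hf.aestronglyMeasurable.mul hh)
    (ae_of_all _ fun x => norm_mul_le_of_ne_zero (hC x))

lemma ContinuousOn.exists_bound_indicator {α : Type*} [TopologicalSpace α] {K W : Set α}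
    {f : α → ℝ} (hf : ContinuousOn f W) (hK : IsCompact K) (hKW : K ⊆ W) :
    ∃ C, ∀ x ∈ K, ‖W.indicator f x‖ ≤ C :=
  hK.exists_bound_of_continuousOn ((hf.mono hKW).congr fun _ hx => Set.indicator_of_mem (hKW hx) f)

lemma Prod.sub_mem_closedBall {X Y : Type*} [SeminormedAddCommGroup X] [SeminormedAddCommGroup Y]
    (p : X × Y) {z : X × Y} {ρ : ℝ} (h₁ : ‖z.1‖ ≤ ρ) (h₂ : ‖z.2‖ ≤ ρ) :
    p - z ∈ closedBall p ρ := by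
  rw [mem_closedBall_iff_norm, sub_sub_cancel_left, norm_neg, Prod.norm_def]
  exact max_le h₁ h₂

lemma mollification_eq_integral_prod {m d n₁ n₂ : ℕ}
    {W : Set (EuclideanSpace ℝ (Fin m) × EuclideanSpace ℝ (Fin d))}
    {g : EuclideanSpace ℝ (Fin m) × EuclideanSpace ℝ (Fin d) → ℝ}
    {q : EuclideanSpace ℝ (Fin m) × EuclideanSpace ℝ (Fin d)}
    (hint : Integrable fun z : EuclideanSpace ℝ (Fin m) × EuclideanSpace ℝ (Fin d) =>
      mollifier m n₁ z.1 * mollifier d n₂ z.2 * W.indicator g (q - z)) :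
    mollification W g n₁ n₂ q
      = ∫ z, mollifier m n₁ z.1 * mollifier d n₂ z.2 * W.indicator g (q - z) := by
  rw [Measure.volume_eq_prod, integral_prod_symm _ hint, mollification]
  refine integral_congr_ae (ae_of_all _ fun y => ?_)
  dsimp only
  rw [← integral_const_mul]
  refine integral_congr_ae (ae_of_all _ fun u => ?_)
  change _ = _ * W.indicator g (q.1 - u, q.2 - y)
  ring

lemma mk_add_sub_mem_closedBall_of_mollifier_ne_zero {m d n₁ n₂ : ℕ}
    {p z : EuclideanSpace ℝ (Fin m) × EuclideanSpace ℝ (Fin d)} {w : EuclideanSpace ℝ (Fin d)}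
    {ρ : ℝ} (hn₁ : 1 / (n₁ : ℝ) ≤ ρ) (hw : ‖w‖ ≤ ρ - 1 / n₂)
    (hz : mollifier m n₁ z.1 * mollifier d n₂ z.2 ≠ 0) :
    (p.1, p.2 + w) - z ∈ closedBall p ρ := by
  have h₁ := (norm_lt_of_mollifier_ne_zero (left_ne_zero_of_mul hz)).le.trans hn₁
  have h₂ := norm_lt_of_mollifier_ne_zero (right_ne_zero_of_mul hz)
  have h₃ : ‖z.2 - w‖ ≤ ρ := by linarith [norm_sub_le z.2 w]
  convert p.sub_mem_closedBall (z := (z.1, z.2 - w)) h₁ h₃ using 1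
  exact Prod.ext (by simp) (by simp only [Prod.snd_sub]; abel)

theorem hasDerivAt_mollification {m d : ℕ}
    {W : Set (EuclideanSpace ℝ (Fin m) × EuclideanSpace ℝ (Fin d))} (hW : IsOpen W)
    {g g' : EuclideanSpace ℝ (Fin m) × EuclideanSpace ℝ (Fin d) → ℝ}
    (hg : ContinuousOn g W) (hg' : ContinuousOn g' W) {v : EuclideanSpace ℝ (Fin d)}
    (hgv : ∀ q ∈ W, HasDerivAt (fun t : ℝ => g (q.1, q.2 + t • v)) (g' q) 0)
    {p : EuclideanSpace ℝ (Fin m) × EuclideanSpace ℝ (Fin d)} {ρ : ℝ}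
    (hρ : closedBall p ρ ⊆ W) {n₁ n₂ : ℕ} (hn₁ : 1 / (n₁ : ℝ) ≤ ρ) (hn₂ : 1 / (n₂ : ℝ) < ρ) :
    HasDerivAt (fun t : ℝ => mollification W g n₁ n₂ (p.1, p.2 + t • v))
      (mollification W g' n₁ n₂ p) 0 := by
  set ψ : EuclideanSpace ℝ (Fin m) × EuclideanSpace ℝ (Fin d) → ℝ :=
    fun z => mollifier m n₁ z.1 * mollifier d n₂ z.2
  have hψ : Integrable ψ := (integrable_mollifier m n₁).mul_prod (integrable_mollifier d n₂)
  set S : Set ℝ := {t | ‖t • v‖ < ρ - 1 / n₂}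
  have hS : S ∈ 𝓝 0 :=
    (isOpen_lt (by fun_prop) continuous_const).mem_nhds (by simpa [S] using hn₂)
  have hshift : ∀ (t : ℝ) z, (p.1, p.2 + t • v) - z = ((p - z).1, (p - z).2 + t • v) :=
    fun t z => Prod.ext (by simp) (by simp only [Prod.snd_sub]; abel)
  have hmem : ∀ t ∈ S, ∀ z, ψ z ≠ 0 → (p.1, p.2 + t • v) - z ∈ closedBall p ρ :=
    fun t ht z hz => mk_add_sub_mem_closedBall_of_mollifier_ne_zero hn₁ (le_of_lt ht) hz
  have hint : ∀ {f : EuclideanSpace ℝ (Fin m) × EuclideanSpace ℝ (Fin d) → ℝ} {C : ℝ},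
      ContinuousOn f W → (∀ x ∈ closedBall p ρ, ‖W.indicator f x‖ ≤ C) → ∀ t ∈ S,
      Integrable fun z => ψ z * W.indicator f ((p.1, p.2 + t • v) - z) :=
    fun hf hC t ht => Integrable.mul_of_norm_le_of_ne_zero hψ
      ((hf.measurable_indicator hW).comp (measurable_const.sub measurable_id)).aestronglyMeasurable
      fun z hz => hC _ (hmem t ht z hz)
  obtain ⟨C₀, hC₀⟩ := hg.exists_bound_indicator (isCompact_closedBall p ρ) hρ
  obtain ⟨C₁, hC₁⟩ := hg'.exists_bound_indicator (isCompact_closedBall p ρ) hρ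
  have h0 : (0 : ℝ) ∈ S := mem_of_mem_nhds hS
  have hp : (p.1, p.2 + (0 : ℝ) • v) = p := by simp
  have hdiff : ∀ z, ∀ t ∈ S, HasDerivAt (fun s => ψ z * W.indicator g ((p.1, p.2 + s • v) - z))
      (ψ z * W.indicator g' ((p.1, p.2 + t • v) - z)) t := by
    intro z t ht
    rcases eq_or_ne (ψ z) 0 with hz | hz
    · simpa only [hz, zero_mul] using hasDerivAt_const t (0 : ℝ)
    simp only [hshift] at hmem ⊢
    exact (hasDerivAt_indicator_line hW hgv (hρ (hmem t ht z hz))).const_mul (ψ z)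
  have hderiv := (hasDerivAt_integral_of_dominated_loc_of_deriv_le
    (F' := fun t z => ψ z * W.indicator g' ((p.1, p.2 + t • v) - z)) hS
    (eventually_of_mem hS fun t ht => (hint hg hC₀ t ht).aestronglyMeasurable) (hint hg hC₀ 0 h0)
    (hint hg' hC₁ 0 h0).aestronglyMeasurable
    (ae_of_all _ fun z t ht => norm_mul_le_of_ne_zero fun hz => hC₁ _ (hmem t ht z hz))
    (hψ.norm.mul_const C₁) (ae_of_all _ hdiff)).2
  rw [hp] at hderiv
  rw [mollification_eq_integral_prod (by simpa only [hp] using hint hg' hC₁ 0 h0)]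
  exact hderiv.congr_of_eventuallyEq
    (eventually_of_mem hS fun t ht => mollification_eq_integral_prod (hint hg hC₀ t ht))

theorem tendsto_mollification_atTop {m d : ℕ}
    {W : Set (EuclideanSpace ℝ (Fin m) × EuclideanSpace ℝ (Fin d))} (hW : IsOpen W)
    {f : EuclideanSpace ℝ (Fin m) × EuclideanSpace ℝ (Fin d) → ℝ} (hf : ContinuousOn f W)
    {p : EuclideanSpace ℝ (Fin m) × EuclideanSpace ℝ (Fin d)} {ρ : ℝ} (hρ₀ : 0 < ρ)
    (hρ : closedBall p ρ ⊆ W) {n₂ : ℕ} (hn₂ : 1 / (n₂ : ℝ) ≤ ρ) :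
    Tendsto (fun n₁ => mollification W f n₁ n₂ p) atTop
      (𝓝 (∫ y, mollifier d n₂ y * W.indicator f (p.1, p.2 - y))) := by
  obtain ⟨C, hC⟩ := hf.exists_bound_indicator (isCompact_closedBall p ρ) hρ
  have hmeas := hf.measurable_indicator hW
  have hmem : ∀ {u y}, ‖u‖ ≤ ρ → mollifier d n₂ y ≠ 0 → (p.1 - u, p.2 - y) ∈ closedBall p ρ :=
    fun hu hy => p.sub_mem_closedBall (z := (_, _)) hu
      ((norm_lt_of_mollifier_ne_zero hy).le.trans hn₂)
  refine tendsto_integral_filter_of_dominated_convergence (fun y => mollifier d n₂ y * C)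
    (Eventually.of_forall fun n₁ => ?_) ?_ ((integrable_mollifier d n₂).mul_const C)
    (ae_of_all _ fun y => ?_)
  · have hm₁ := measurable_mollifier m n₁
    exact (measurable_mollifier d n₂).aestronglyMeasurable.mul
      (StronglyMeasurable.integral_prod_right
        (Measurable.stronglyMeasurable (by fun_prop))).aestronglyMeasurable
  · filter_upwards [eventually_ne_atTop 0,
      tendsto_one_div_atTop_nhds_zero_nat.eventually_lt_const hρ₀] with n₁ hn₁ hρn₁
    refine ae_of_all _ fun y => (norm_mul_le_of_ne_zero fun hy => norm_integral_mollifier_mul_le hn₁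
      fun u hu => hC _ (hmem ((norm_lt_of_mollifier_ne_zero hu).le.trans hρn₁.le) hy)).trans_eq ?_
    rw [Real.norm_of_nonneg (mollifier_nonneg d n₂ y)]
  · rcases eq_or_ne (mollifier d n₂ y) 0 with hy | hy
    · simpa only [hy, zero_mul] using tendsto_const_nhds
    have hyW : (p.1, p.2 - y) ∈ W := hρ (by simpa using hmem (norm_zero.le.trans hρ₀.le) hy)
    exact (tendsto_integral_mollifier_mul_comp_sub (f := fun x => W.indicator f (x, p.2 - y))
      (hmeas.comp (measurable_id.prodMk measurable_const)).aestronglyMeasurable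
      (Tendsto.comp (hf.continuousAt_indicator_of_isOpen hW hyW)
        (Continuous.continuousAt (by fun_prop)))).const_mul _

/-- **Lemma A.1(iv)**: if `g` has continuous partial derivatives `gx i = ∂g/∂x_i` on
`W`, then for every `(λ, x) ∈ W` and every `i` there is `N` such that for each
`n₂ ≥ N` the inner limit `L n₂ = lim_{n₁→∞} ∂g_{n₁,n₂}/∂x_i(λ, x)` exists, and
`lim_{n₂→∞} L n₂ = ∂g/∂x_i(λ, x)`. -/
theorem stmt3 {m d : ℕ}
    (W : Set (EuclideanSpace ℝ (Fin m) × EuclideanSpace ℝ (Fin d)))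
    (hW : IsOpen W)
    (g : EuclideanSpace ℝ (Fin m) × EuclideanSpace ℝ (Fin d) → ℝ)
    (hg : ContinuousOn g W)
    (gx : Fin d → (EuclideanSpace ℝ (Fin m) × EuclideanSpace ℝ (Fin d)) → ℝ)
    (hgx : ∀ i : Fin d, ∀ p ∈ W,
      HasDerivAt (fun t : ℝ => g (p.1, p.2 + t • EuclideanSpace.single i 1))
        (gx i p) 0)
    (hgxc : ∀ i : Fin d, ContinuousOn (gx i) W)
    (p : EuclideanSpace ℝ (Fin m) × EuclideanSpace ℝ (Fin d)) (hp : p ∈ W)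
    (i : Fin d) :
    ∃ N : ℕ, ∃ L : ℕ → ℝ,
      (∀ n₂ ≥ N,
        Tendsto
          (fun n₁ =>
            deriv
              (fun t : ℝ =>
                mollification W g n₁ n₂ (p.1, p.2 + t • EuclideanSpace.single i 1))
              0)
          atTop (𝓝 (L n₂))) ∧
      Tendsto L atTop (𝓝 (gx i p)) := by
  obtain ⟨ρ, hρ₀, hρ⟩ := nhds_basis_closedBall.mem_iff.1 (hW.mem_nhds hp)
  obtain ⟨N, hN⟩ :=
    eventually_atTop.1 (tendsto_one_div_atTop_nhds_zero_nat.eventually_lt_const hρ₀)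
  refine ⟨N, fun n₂ => ∫ y, mollifier d n₂ y * W.indicator (gx i) (p.1, p.2 - y),
    fun n₂ hn₂ => ?_, ?_⟩
  · refine (tendsto_mollification_atTop hW (hgxc i) hρ₀ hρ (hN n₂ hn₂).le).congr' ?_
    filter_upwards [eventually_ge_atTop N] with n₁ hn₁
    exact (hasDerivAt_mollification hW hg (hgxc i) (hgx i) hρ (hN n₁ hn₁).le
      (hN n₂ hn₂)).deriv.symm
  · have hcont : ContinuousAt (fun x => W.indicator (gx i) (p.1, x)) p.2 :=
      Tendsto.comp ((hgxc i).continuousAt_indicator_of_isOpen hW hp)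
        (Continuous.continuousAt (by fun_prop))
    simpa only [Function.comp_apply, Prod.mk.eta, Set.indicator_of_mem hp] using
      tendsto_integral_mollifier_mul_comp_sub
        (((hgxc i).measurable_indicator hW).comp measurable_prodMk_left).aestronglyMeasurable hcont
end

section
/- Let (Ω, F, (F_t)_{t≥0}, P) be a filtered probability space, m, d ≥ 1, and let f : ℝ^m × ℝ^d → ℝ be continuous such that f(λ, ·) : ℝ^d → ℝ is concave for every λ ∈ ℝ^m and such that f is L-Lipschitz with constant L ≥ 0 with respect to the metric ((λ, x), (λ', x')) ↦ Σ_{v=1}^{m}|λ_v − λ'_v| + Σ_{i=1}^{d}|x_i − x'_i|. Let Λ be an adapted ℝ^m-valued process with continuous paths of finite variation, M an ℝ^d-valued martingale with respect to (F_t) with continuous paths, V an adapted ℝ^d-valued process with continuous paths of finite variation, with M(0) = V(0) = 0, and suppose there is a constant κ ≥ 0 such that, almost surely, sup_{t≥0} ‖Λ(t)‖ ≤ κ, sup_{t≥0} ‖M(t)‖ ≤ κ, and Σ_{v=1}^{m} TV(Λ_v; [0, ∞)) + Σ_{i=1}^{d} TV(V_i; [0, ∞)) ≤ κ, where TV denotes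 total variation. Fix μ(0) ∈ ℝ^d and set μ(t) = μ(0) + M(t) + V(t). Then the process Z(t) = −f(Λ(t), μ(t)) + L ( Σ_{v=1}^{m} TV(Λ_v; [0, t]) + Σ_{i=1}^{d} TV(V_i; [0, t]) ) is a submartingale with respect to (F_t) and P, i.e., Z is adapted, each Z(t) is integrable, and E[Z(t) | F_s] ≥ Z(s) almost surely for all 0 ≤ s ≤ t. (This is the assertion established in the proof of Theorem A.5 of the paper, from which the semimartingale property of f(Λ(·), μ(·)) follows.) -/
/-!
Fix `s ≤ t`. The Lipschitz bound and the additivity of the variation give, path by path,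
`f (Λ s) (μ₀ + M s + V s) - f (Λ s) (μ₀ + M t + V s) ≤ Z t - Z s`,
so it suffices that `E[f (Λ s) (μ₀ + M t + V s) | ℱ s] ≤ f (Λ s) (μ₀ + M s + V s)`.
This is conditional Jensen for the `ℱ s`-measurable random concave function
`y ↦ f (Λ s) (μ₀ + y + V s)` applied to the martingale `M`; it is proved by majorizing this
function on a ball by affine functions drawn from a countable dense family. Adaptedness of the
variation terms comes from the fact that the variation of a continuous path on `[0, t]` is the
supremum of its variations along uniform grids.
-/

open MeasureTheory Filter Topology Set
open scoped NNReal ENNReal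

noncomputable def uniformGrid (t : ℝ≥0) (N j : ℕ) : ℝ≥0 := j * t / (N + 1)

lemma monotone_uniformGrid (t : ℝ≥0) (N : ℕ) : Monotone (uniformGrid t N) :=
  fun i j hij => by unfold uniformGrid; gcongr

lemma uniformGrid_le {t : ℝ≥0} {N j : ℕ} (hj : j ≤ N + 1) : uniformGrid t N j ≤ t := by
  rw [uniformGrid, div_le_iff₀ (by positivity), mul_comm]
  gcongr
  exact_mod_cast hj

lemma uniformGrid_image_subset_Icc (t : ℝ≥0) (N : ℕ) :
    uniformGrid t N '' Iic (N + 1) ⊆ Icc 0 t :=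
  image_subset_iff.2 fun _ hj => ⟨zero_le, uniformGrid_le hj⟩

lemma monotone_uniformGrid_floor (t : ℝ≥0) (N : ℕ) :
    Monotone fun x : ℝ≥0 => uniformGrid t N ⌊x * (N + 1) / t⌋₊ :=
  (monotone_uniformGrid t N).comp fun x y hxy => Nat.floor_mono (by gcongr)

lemma uniformGrid_floor_mem_image {t x : ℝ≥0} (hx : x ≤ t) (N : ℕ) :
    uniformGrid t N ⌊x * (N + 1) / t⌋₊ ∈ uniformGrid t N '' Iic (N + 1) := by
  refine mem_image_of_mem _ (Nat.floor_le_of_le ?_)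
  push_cast
  exact div_le_of_le_mul₀ zero_le (by positivity) (by rw [mul_comm]; gcongr)

lemma tendsto_uniformGrid_floor {t x : ℝ≥0} (hx : x ≤ t) :
    Tendsto (fun N : ℕ => uniformGrid t N ⌊x * (N + 1) / t⌋₊) atTop (𝓝 x) := by
  rcases eq_or_ne t 0 with rfl | ht
  · simp [uniformGrid, nonpos_iff_eq_zero.1 hx]
  have hmesh : Tendsto (fun N : ℕ => x - t / (N + 1)) atTop (𝓝 x) := by
    simpa using tendsto_const_nhds.sub
      ((tendsto_const_div_atTop_nhds_zero_nat t).comp (tendsto_add_atTop_nat 1))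
  have hx_eq (N : ℕ) : x = x * (N + 1) / t * t / (N + 1) := by field_simp
  refine tendsto_of_tendsto_of_tendsto_of_le_of_le hmesh tendsto_const_nhds (fun N => ?_)
    (fun N => ?_)
  · rw [tsub_le_iff_right, uniformGrid, ← add_div, ← add_one_mul]
    conv_lhs => rw [hx_eq N]
    gcongr
    exact (Nat.lt_floor_add_one _).le
  · rw [uniformGrid]
    conv_rhs => rw [hx_eq N]
    gcongr
    exact Nat.floor_le zero_le

theorem eVariationOn_Icc_eq_iSup_sum_uniformGrid {E : Type*} [PseudoEMetricSpace E]
    {v : ℝ≥0 → E} {t : ℝ≥0} (hv : ContinuousOn v (Icc 0 t)) :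
    eVariationOn v (Icc 0 t) = ⨆ N : ℕ, ∑ j ∈ Finset.range (N + 1),
      edist (v (uniformGrid t N j)) (v (uniformGrid t N (j + 1))) := by
  simp_rw [← eVariationOn.image_range_of_monotone v (monotone_uniformGrid t _)]
  -- Rounding down to the grid converges pointwise, and the variation is lower semicontinuous
  -- under pointwise convergence.
  refine le_antisymm (le_of_forall_lt fun a ha => ?_) (iSup_le fun N => ?_)
  · obtain ⟨N, hN⟩ := (eVariationOn.lowerSemicontinuous_aux (p := atTop)
      (F := fun N x => v (uniformGrid t N ⌊x * (N + 1) / t⌋₊))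
      (fun x hx => (hv x hx).tendsto.comp (tendsto_nhdsWithin_iff.2
        ⟨tendsto_uniformGrid_floor hx.2, Eventually.of_forall fun N =>
          uniformGrid_image_subset_Icc t N (uniformGrid_floor_mem_image hx.2 N)⟩)) ha).exists
    exact hN.trans_le (le_iSup_of_le N (eVariationOn.comp_le_of_monotoneOn v _
      ((monotone_uniformGrid_floor t N).monotoneOn _)
      fun x hx => uniformGrid_floor_mem_image hx.2 N))
  · exact eVariationOn.mono v (uniformGrid_image_subset_Icc t N)

theorem measurable_eVariationOn_Icc {Ω E : Type*} {mΩ : MeasurableSpace Ω} [PseudoMetricSpace E]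
    [MeasurableSpace E] [OpensMeasurableSpace E] [SecondCountableTopology E]
    {g : ℝ≥0 → Ω → E} {t : ℝ≥0} (hc : ∀ ω, ContinuousOn (fun s => g s ω) (Icc 0 t))
    (hg : ∀ s ≤ t, Measurable (g s)) :
    Measurable fun ω => eVariationOn (fun s => g s ω) (Icc 0 t) := by
  simp_rw [eVariationOn_Icc_eq_iSup_sum_uniformGrid (hc _)]
  exact .iSup fun N => Finset.measurable_sum _ fun j hj =>
    (hg _ (uniformGrid_le (Finset.mem_range.1 hj).le)).edist
      (hg _ (uniformGrid_le (Finset.mem_range.1 hj)))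

noncomputable def l1Variation {ι : Type*} [Fintype ι] (u : ℝ≥0 → ι → ℝ) (t : ℝ≥0) : ℝ :=
  ∑ i, (eVariationOn (fun s => u s i) (Icc 0 t)).toReal

section l1Variation

variable {ι : Type*} [Fintype ι] {u : ℝ≥0 → ι → ℝ}

lemma l1Variation_nonneg (t : ℝ≥0) : 0 ≤ l1Variation u t :=
  Finset.sum_nonneg fun _ _ => ENNReal.toReal_nonneg

lemma sum_abs_sub_le_l1Variation_sub (hu : ∀ i, BoundedVariationOn (fun s => u s i) univ)
    {s t : ℝ≥0} (hst : s ≤ t) :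
    ∑ i, |u t i - u s i| ≤ l1Variation u t - l1Variation u s := by
  rw [l1Variation, l1Variation, ← Finset.sum_sub_distrib]
  gcongr with i
  simpa [variationOnFromTo.eq_of_le, zero_le] using
    variationOnFromTo.abs_sub_le_sub_of_le (hu i).locallyBoundedVariationOn
      (mem_univ 0) (mem_univ s) (mem_univ t) hst

lemma l1Variation_le_toReal_sum (hu : ∑ i, eVariationOn (fun s => u s i) univ ≠ ⊤)
    (t : ℝ≥0) : l1Variation u t ≤ (∑ i, eVariationOn (fun s => u s i) univ).toReal := by
  rw [ENNReal.toReal_sum fun i _ => ENNReal.sum_ne_top.1 hu i (Finset.mem_univ i)]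
  exact Finset.sum_le_sum fun i _ => ENNReal.toReal_mono
    (ENNReal.sum_ne_top.1 hu i (Finset.mem_univ i)) (eVariationOn.mono _ (subset_univ _))

lemma norm_le_toReal_sum_eVariationOn (hu0 : u 0 = 0)
    (hu : ∑ i, eVariationOn (fun s => u s i) univ ≠ ⊤) (t : ℝ≥0) :
    ‖u t‖ ≤ (∑ i, eVariationOn (fun s => u s i) univ).toReal := by
  refine (pi_norm_le_iff_of_nonneg ENNReal.toReal_nonneg).2 fun i => ?_
  have hi := ENNReal.sum_ne_top.1 hu i (Finset.mem_univ i)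
  calc ‖u t i‖ = dist (u t i) (u 0 i) := by simp [hu0]
    _ ≤ (eVariationOn (fun s => u s i) univ).toReal := by
      rw [dist_edist]
      exact ENNReal.toReal_mono hi (eVariationOn.edist_le _ (mem_univ t) (mem_univ 0))
    _ ≤ _ := ENNReal.toReal_mono hu
      (Finset.single_le_sum (f := fun i => eVariationOn (fun s => u s i) univ)
        (fun _ _ => zero_le) (Finset.mem_univ i))

lemma Adapted.measurable_l1Variation {Ω : Type*} {mΩ : MeasurableSpace Ω}
    {ℱ : Filtration ℝ≥0 mΩ} {g : ℝ≥0 → Ω → ι → ℝ} (hg : Adapted ℱ g)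
    (hc : ∀ ω, Continuous fun s => g s ω) (t : ℝ≥0) :
    Measurable[ℱ t] fun ω => l1Variation (g · ω) t :=
  Finset.measurable_sum _ fun i _ => (measurable_eVariationOn_Icc
    (fun ω => ((continuous_apply i).comp (hc ω)).continuousOn)
    fun s hs => (measurable_pi_apply i).comp ((hg s).mono (ℱ.mono hs) le_rfl)).ennreal_toReal

end l1Variation

lemma ae_bounds_of_eVariationOn_le {Ω ι ι' : Type*} [Fintype ι] [Fintype ι']
    {mΩ : MeasurableSpace Ω} {P : Measure Ω} {Λ : ℝ≥0 → Ω → ι → ℝ} {M V : ℝ≥0 → Ω → ι' → ℝ}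
    (hV0 : ∀ ω, V 0 ω = 0) {κ : ℝ} (hκ : 0 ≤ κ)
    (hbd : ∀ᵐ ω ∂P, (∀ t, ‖Λ t ω‖ ≤ κ) ∧ (∀ t, ‖M t ω‖ ≤ κ) ∧
      ∑ v, eVariationOn (fun t => Λ t ω v) univ + ∑ i, eVariationOn (fun t => V t ω i) univ ≤
        ENNReal.ofReal κ) (μ₀ : ι' → ℝ) :
    ∀ᵐ ω ∂P, ∀ r r', ‖Λ r ω‖ ≤ κ ∧ ‖M r ω‖ ≤ κ ∧ ‖μ₀ + M r ω + V r' ω‖ ≤ ‖μ₀‖ + 2 * κ ∧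
      |l1Variation (Λ · ω) r + l1Variation (V · ω) r| ≤ κ := by
  filter_upwards [hbd] with ω ⟨hΛκ, hMκ, h⟩ r r'
  obtain ⟨hΛ, hV⟩ := ENNReal.add_ne_top.1 (ne_top_of_le_ne_top ENNReal.ofReal_ne_top h)
  have hsum := ENNReal.toReal_le_of_le_ofReal hκ h
  rw [ENNReal.toReal_add hΛ hV] at hsum
  have hΛ_nonneg : 0 ≤ (∑ v, eVariationOn (fun t => Λ t ω v) univ).toReal :=
    ENNReal.toReal_nonneg
  have hVκ := norm_le_toReal_sum_eVariationOn (u := (V · ω)) (hV0 ω) hV r'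
  refine ⟨hΛκ r, hMκ r, (norm_add₃_le ..).trans (by linarith [hMκ r]), abs_le.2 ⟨?_, ?_⟩⟩
  · linarith [l1Variation_nonneg (u := (Λ · ω)) r, l1Variation_nonneg (u := (V · ω)) r]
  · linarith [l1Variation_le_toReal_sum (u := (Λ · ω)) hΛ r,
      l1Variation_le_toReal_sum (u := (V · ω)) hV r]

theorem abs_sub_le_mul_l1Variation_sub {ι ι' : Type*} [Fintype ι] [Fintype ι']
    {f : (ι → ℝ) → (ι' → ℝ) → ℝ} {L : ℝ} (hL : 0 ≤ L)
    (hLip : ∀ lam lam' x x', |f lam x - f lam' x'| ≤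
      L * ((∑ v, |lam v - lam' v|) + ∑ i, |x i - x' i|))
    {lam : ℝ≥0 → ι → ℝ} {u : ℝ≥0 → ι' → ℝ}
    (hlam : ∀ v, BoundedVariationOn (fun s => lam s v) univ)
    (hu : ∀ i, BoundedVariationOn (fun s => u s i) univ) (x : ι' → ℝ) {s t : ℝ≥0} (hst : s ≤ t) :
    |f (lam t) (x + u t) - f (lam s) (x + u s)| ≤
      L * ((l1Variation lam t + l1Variation u t) - (l1Variation lam s + l1Variation u s)) := by
  refine (hLip _ _ _ _).trans (mul_le_mul_of_nonneg_left ?_ hL)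
  simp only [Pi.add_apply, add_sub_add_left_eq_sub]
  linarith [sum_abs_sub_le_l1Variation_sub hlam hst, sum_abs_sub_le_l1Variation_sub hu hst]

lemma integrable_of_continuous_of_ae_norm_le {A B Ω : Type*} [NormedAddCommGroup A]
    [ProperSpace A] [NormedAddCommGroup B] [ProperSpace B] {mΩ : MeasurableSpace Ω}
    {P : Measure Ω} [IsFiniteMeasure P] {f : A → B → ℝ}
    (hf : Continuous fun q : A × B => f q.1 q.2) {a : Ω → A} {b : Ω → B}
    (ha : AEStronglyMeasurable a P) (hb : AEStronglyMeasurable b P) {ra rb : ℝ}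
    (har : ∀ᵐ ω ∂P, ‖a ω‖ ≤ ra) (hbr : ∀ᵐ ω ∂P, ‖b ω‖ ≤ rb) :
    Integrable (fun ω => f (a ω) (b ω)) P := by
  obtain ⟨C, hC⟩ := ((isCompact_closedBall (0 : A) ra).prod
    (isCompact_closedBall (0 : B) rb)).exists_bound_of_continuousOn hf.continuousOn
  refine Integrable.of_bound (hf.comp_aestronglyMeasurable (ha.prodMk hb)) C ?_
  filter_upwards [har, hbr] with ω h1 h2
  exact hC (a ω, b ω) ⟨mem_closedBall_zero_iff.2 h1, mem_closedBall_zero_iff.2 h2⟩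

lemma abs_affine_sub_affine_le {E : Type*} [NormedAddCommGroup E] [NormedSpace ℝ E]
    (p q : (E →L[ℝ] ℝ) × ℝ) (y : E) :
    |(p.1 y + p.2) - (q.1 y + q.2)| ≤ dist p q * (‖y‖ + 1) := by
  have h1 : ‖p.1 - q.1‖ ≤ dist p q := dist_eq_norm p.1 q.1 ▸ le_max_left _ _
  have h2 : |p.2 - q.2| ≤ dist p q := Real.dist_eq p.2 q.2 ▸ le_max_right _ _
  calc |(p.1 y + p.2) - (q.1 y + q.2)| = |(p.1 - q.1) y + (p.2 - q.2)| := by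
        simp only [FunLike.coe_sub, Pi.sub_apply]; ring_nf
    _ ≤ ‖p.1 - q.1‖ * ‖y‖ + |p.2 - q.2| :=
        (abs_add_le _ _).trans (add_le_add_left ((p.1 - q.1).le_opNorm y) _)
    _ ≤ dist p q * ‖y‖ + dist p q := by gcongr
    _ = dist p q * (‖y‖ + 1) := by ring

theorem ConcaveOn.exists_mem_dense_affine_majorant_on_ball {E : Type*} [NormedAddCommGroup E]
    [NormedSpace ℝ E] {g : E → ℝ} (hg : ConcaveOn ℝ univ g) (hgc : UpperSemicontinuous g)
    {D : Set ((E →L[ℝ] ℝ) × ℝ)} (hD : Dense D) {R ε : ℝ} (hε : 0 < ε) {x : E}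
    (hx : x ∈ Metric.ball 0 R) :
    ∃ p ∈ D, (∀ y ∈ Metric.ball 0 R, g y ≤ p.1 y + p.2) ∧ p.1 x + p.2 ≤ g x + ε := by
  obtain ⟨l, c, hle, hlx⟩ := hg.neg.exists_affine_le_of_lt (𝕜 := ℝ) (mem_univ x)
    (a := -g x - ε / 2) (by rw [Pi.neg_apply]; linarith) isClosed_univ
    (lowerSemicontinuousOn_univ_iff.2 hgc.neg)
  have hmaj (y : E) : g y ≤ -l y - c := by
    have := hle ⟨y, mem_univ y⟩
    simp only [Pi.add_apply, domRestrict_apply, Function.comp_apply, RCLike.re_to_real,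
      Function.const_apply, Pi.neg_apply] at this
    linarith
  rw [RCLike.re_to_real] at hlx
  -- Raise this majorant by `ε / 4` and move to a nearby member of `D`; on the ball the move
  -- costs at most `ε / 4`.
  have hR : 0 < R + 1 := by have := mem_ball_zero_iff.1 hx; linarith [norm_nonneg x]
  obtain ⟨p, hpD, hp⟩ := hD.exists_dist_lt ((-l, -c + ε / 4) : (E →L[ℝ] ℝ) × ℝ)
    (by positivity : 0 < ε / (4 * (R + 1)))
  have hclose {y : E} (hy : y ∈ Metric.ball 0 R) :
      |(p.1 y + p.2) - (-l y + (-c + ε / 4))| ≤ ε / 4 := by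
    have hy' : ‖y‖ + 1 ≤ R + 1 := by have := mem_ball_zero_iff.1 hy; linarith
    calc _ ≤ dist p (-l, -c + ε / 4) * (‖y‖ + 1) := abs_affine_sub_affine_le p _ y
      _ ≤ ε / (4 * (R + 1)) * (R + 1) := by rw [dist_comm] at hp; gcongr
      _ = ε / 4 := by field_simp
  refine ⟨p, hpD, fun y hy => ?_, ?_⟩
  · have := abs_le.1 (hclose hy); linarith [hmaj y]
  · have := abs_le.1 (hclose hx); linarith

theorem measurableSet_setOf_forall_mem_le {Ω E : Type*} {m : MeasurableSpace Ω}
    [TopologicalSpace E] [TopologicalSpace.SeparableSpace E] {φ : Ω → E → ℝ} {ℓ : E → ℝ}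
    (hφc : ∀ ω, Continuous (φ ω)) (hφm : ∀ y, Measurable fun ω => φ ω y) (hℓ : Continuous ℓ)
    {U : Set E} (hU : IsOpen U) :
    MeasurableSet {ω | ∀ y ∈ U, φ ω y ≤ ℓ y} := by
  obtain ⟨D, hDc, hD⟩ := TopologicalSpace.exists_countable_dense E
  have : {ω | ∀ y ∈ U, φ ω y ≤ ℓ y} = ⋂ y ∈ D ∩ U, {ω | φ ω y ≤ ℓ y} := by
    ext ω
    simp only [mem_ofPred_eq, mem_iInter, mem_inter_iff, and_imp]
    refine ⟨fun h y _ hyU => h y hyU, fun h y hy => ?_⟩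
    exact closure_minimal (s := U ∩ D) (fun z hz => h z hz.2 hz.1) (isClosed_le (hφc ω) hℓ)
      (hD.open_subset_closure_inter hU hy)
  rw [this]
  exact .biInter (hDc.mono inter_subset_left) fun y _ => measurableSet_le (hφm y) measurable_const

lemma ae_condExp_le_of_ae_le_on {Ω : Type*} {m mΩ : MeasurableSpace Ω} {P : Measure Ω}
    {A : Set Ω} (hA : MeasurableSet[m] A) {f g : Ω → ℝ} (hf : Integrable f P)
    (hg : Integrable g P) (hfg : ∀ᵐ ω ∂P, ω ∈ A → f ω ≤ g ω) :
    ∀ᵐ ω ∂P, ω ∈ A → P[f|m] ω ≤ P[g|m] ω := by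
  by_cases hm : m ≤ mΩ
  swap; · simp [condExp_of_not_le hm]
  have hmono := condExp_mono (m := m) (hf.indicator (hm _ hA)) (hg.indicator (hm _ hA)) (by
    filter_upwards [hfg] with ω h
    by_cases hω : ω ∈ A <;> simp [hω, h])
  filter_upwards [hmono, condExp_indicator hf hA, condExp_indicator hg hA] with ω h1 h2 h3 hω
  simpa [h2, h3, indicator_of_mem hω] using h1

theorem condExp_map_le_of_forall_concaveOn {E : Type*} [NormedAddCommGroup E] [NormedSpace ℝ E]
    [FiniteDimensional ℝ E] {Ω : Type*} {m mΩ : MeasurableSpace Ω} {P : Measure Ω}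
    [IsFiniteMeasure P] (hm : m ≤ mΩ) {φ : Ω → E → ℝ} (hφ : ∀ ω, ConcaveOn ℝ univ (φ ω))
    (hφm : ∀ y, Measurable[m] fun ω => φ ω y) {X : Ω → E} (hX : Integrable X P) {R : ℝ}
    (hXR : ∀ᵐ ω ∂P, ‖X ω‖ ≤ R) (hφX : Integrable (fun ω => φ ω (X ω)) P) :
    P[fun ω => φ ω (X ω)|m] ≤ᵐ[P] fun ω => φ ω (P[X|m] ω) := by
  have hφc (ω : Ω) : Continuous (φ ω) := continuousOn_univ.1 ((hφ ω).continuousOn isOpen_univ)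
  -- The affine majorants of `φ ω` depend on `ω`; drawing them from a countable dense family
  -- makes the events `A n` measurable and the bounds on them hold simultaneously a.e.
  let p := TopologicalSpace.denseSeq ((E →L[ℝ] ℝ) × ℝ)
  let A (n : ℕ) : Set Ω := {ω | ∀ y ∈ Metric.ball 0 (R + 1), φ ω y ≤ (p n).1 y + (p n).2}
  have hA (n : ℕ) : MeasurableSet[m] (A n) :=
    measurableSet_setOf_forall_mem_le hφc hφm (by fun_prop) Metric.isOpen_ball
  have hAff (n : ℕ) :
      ∀ᵐ ω ∂P, ω ∈ A n → P[fun ω => φ ω (X ω)|m] ω ≤ (p n).1 (P[X|m] ω) + (p n).2 := by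
    have hle : ∀ᵐ ω ∂P, ω ∈ A n → φ ω (X ω) ≤ (p n).1 (X ω) + (p n).2 := by
      filter_upwards [hXR] with ω hω hωA
      exact hωA _ (mem_ball_zero_iff.2 (by linarith))
    filter_upwards [ae_condExp_le_of_ae_le_on (hA n) hφX
      (((p n).1.integrable_comp hX).add (integrable_const _)) hle,
      (p n).1.comp_condExp_add_const_comm hm hX (p n).2] with ω h1 h2 hωA
    exact (h1 hωA).trans_eq h2.symm
  have hYR : ∀ᵐ ω ∂P, P[X|m] ω ∈ Metric.closedBall 0 R :=
    (convex_closedBall 0 R).condExp_mem hm hX Metric.isClosed_closedBall (by simpa using hXR)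
  filter_upwards [ae_all_iff.2 hAff, hYR] with ω hω hωR
  refine le_of_forall_pos_le_add fun ε hε => ?_
  obtain ⟨_, ⟨n, rfl⟩, hmaj, hval⟩ := (hφ ω).exists_mem_dense_affine_majorant_on_ball
    (hφc ω).upperSemicontinuous (TopologicalSpace.denseRange_denseSeq _) hε
    (x := P[X|m] ω) (R := R + 1) (mem_ball_zero_iff.2 (by linarith [mem_closedBall_zero_iff.1 hωR]))
  exact (hω n hmaj).trans hval

theorem Martingale.condExp_map_le {E : Type*} [NormedAddCommGroup E] [NormedSpace ℝ E]
    [FiniteDimensional ℝ E] {ι Ω : Type*} [Preorder ι] {mΩ : MeasurableSpace Ω}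
    {P : Measure Ω} [IsFiniteMeasure P] {ℱ : Filtration ι mΩ} {M : ι → Ω → E}
    (hM : Martingale M ℱ P) {s t : ι} (hst : s ≤ t) {φ : Ω → E → ℝ}
    (hφ : ∀ ω, ConcaveOn ℝ univ (φ ω)) (hφm : ∀ y, Measurable[ℱ s] fun ω => φ ω y) {R : ℝ}
    (hR : ∀ᵐ ω ∂P, ‖M t ω‖ ≤ R) (hφi : Integrable (fun ω => φ ω (M t ω)) P) :
    P[fun ω => φ ω (M t ω)|ℱ s] ≤ᵐ[P] fun ω => φ ω (M s ω) := by
  filter_upwards [condExp_map_le_of_forall_concaveOn (ℱ.le s) hφ hφm (hM.integrable t) hR hφi,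
    hM.condExp_ae_eq hst] with ω h1 h2
  rwa [h2] at h1

lemma condExp_nonneg_of_sub_le {Ω : Type*} {m mΩ : MeasurableSpace Ω} {P : Measure Ω}
    (hm : m ≤ mΩ) [SigmaFinite (P.trim hm)] {ψ g Y : Ω → ℝ} (hψ : StronglyMeasurable[m] ψ)
    (hψi : Integrable ψ P) (hgi : Integrable g P) (hYi : Integrable Y P) (hgψ : P[g|m] ≤ᵐ[P] ψ)
    (hY : ∀ ω, ψ ω - g ω ≤ Y ω) : 0 ≤ᵐ[P] P[Y|m] := by
  filter_upwards [condExp_mono (m := m) (hψi.sub hgi) hYi (Eventually.of_forall hY),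
    condExp_sub hψi hgi m, hgψ] with ω h1 h2 h3
  rw [h2, Pi.sub_apply, condExp_of_stronglyMeasurable hm hψ hψi] at h1
  simp only [Pi.zero_apply]
  linarith

theorem stmt8_general {m d : ℕ}
    {Ω : Type*} {mΩ : MeasurableSpace Ω} (P : Measure Ω) [IsProbabilityMeasure P]
    (ℱ : Filtration ℝ≥0 mΩ)
    (f : (Fin m → ℝ) → (Fin d → ℝ) → ℝ)
    (hfc : Continuous fun q : (Fin m → ℝ) × (Fin d → ℝ) => f q.1 q.2)
    (hconc : ∀ lam : Fin m → ℝ, ConcaveOn ℝ Set.univ (f lam))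
    (L : ℝ) (hL : 0 ≤ L)
    (hLip : ∀ lam lam' : Fin m → ℝ, ∀ x x' : Fin d → ℝ,
      |f lam x - f lam' x'| ≤
        L * ((∑ v, |lam v - lam' v|) + ∑ i, |x i - x' i|))
    (Λ : ℝ≥0 → Ω → (Fin m → ℝ))
    (hΛadapted : Adapted ℱ Λ)
    (hΛcont : ∀ ω, Continuous fun t => Λ t ω)
    (hΛfv : ∀ ω v, BoundedVariationOn (fun t => Λ t ω v) Set.univ)
    (M : ℝ≥0 → Ω → (Fin d → ℝ))
    (hM : Martingale M ℱ P)
    (V : ℝ≥0 → Ω → (Fin d → ℝ))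
    (hVadapted : Adapted ℱ V)
    (hVcont : ∀ ω, Continuous fun t => V t ω)
    (hVfv : ∀ ω i, BoundedVariationOn (fun t => V t ω i) Set.univ)
    (hV0 : ∀ ω, V 0 ω = 0)
    (κ : ℝ) (hκ : 0 ≤ κ)
    (hbd : ∀ᵐ ω ∂P,
      (∀ t, ‖Λ t ω‖ ≤ κ) ∧ (∀ t, ‖M t ω‖ ≤ κ) ∧
        (∑ v, eVariationOn (fun t => Λ t ω v) Set.univ)
          + (∑ i, eVariationOn (fun t => V t ω i) Set.univ) ≤ ENNReal.ofReal κ)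
    (μ₀ : Fin d → ℝ)
    (Z : ℝ≥0 → Ω → ℝ)
    (hZ : ∀ t ω,
      Z t ω = -f (Λ t ω) (μ₀ + M t ω + V t ω)
        + L * ((∑ v, (eVariationOn (fun s => Λ s ω v) (Icc 0 t)).toReal)
             + ∑ i, (eVariationOn (fun s => V s ω i) (Icc 0 t)).toReal)) :
    Submartingale Z ℱ P := by
  obtain rfl : Z = fun t ω => -f (Λ t ω) (μ₀ + M t ω + V t ω)
      + L * (l1Variation (Λ · ω) t + l1Variation (V · ω) t) := funext₂ hZ
  have hbdd := ae_bounds_of_eVariationOn_le hV0 hκ hbd μ₀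
  have hfm (r : ℝ≥0) : Measurable[ℱ r] fun ω => f (Λ r ω) (μ₀ + M r ω + V r ω) :=
    hfc.measurable.comp ((hΛadapted r).prodMk
      ((measurable_const.add (hM.stronglyAdapted r).measurable).add (hVadapted r)))
  have hvarm (r : ℝ≥0) :
      Measurable[ℱ r] fun ω => l1Variation (Λ · ω) r + l1Variation (V · ω) r :=
    (Adapted.measurable_l1Variation hΛadapted hΛcont r).add
      (Adapted.measurable_l1Variation hVadapted hVcont r)
  have hF (r r' : ℝ≥0) : Integrable (fun ω => f (Λ r ω) (μ₀ + M r' ω + V r ω)) P :=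
    integrable_of_continuous_of_ae_norm_le hfc
      ((hΛadapted r).mono (ℱ.le r) le_rfl).aestronglyMeasurable
      ((aestronglyMeasurable_const.add (hM.integrable r').1).add
        ((hVadapted r).mono (ℱ.le r) le_rfl).aestronglyMeasurable)
      (hbdd.mono fun ω h => (h r r).1) (hbdd.mono fun ω h => (h r' r).2.2.1)
  have hZint (t : ℝ≥0) := (hF t t).neg.add ((Integrable.of_bound
    ((hvarm t).mono (ℱ.le t) le_rfl).aestronglyMeasurable κ
    (hbdd.mono fun ω h => (h t t).2.2.2)).const_mul L)
  refine submartingale_of_condExp_sub_nonneg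
    (fun t => ((hfm t).neg.add (measurable_const.mul (hvarm t))).stronglyMeasurable) hZint
    fun s t hst => condExp_nonneg_of_sub_le (ℱ.le s) (hfm s).stronglyMeasurable (hF s s)
      (hF s t) ((hZint t).sub (hZint s)) ?_ fun ω => ?_
  · exact Martingale.condExp_map_le hM hst
      (φ := fun ω y => f (Λ s ω) (μ₀ + y + V s ω))
      (fun ω => by simpa only [preimage_univ, Function.comp_def] using
        ((hconc (Λ s ω)).translate_left (V s ω)).translate_right μ₀)
      (fun y => hfc.measurable.comp ((hΛadapted s).prodMk (measurable_const.add (hVadapted s))))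
      (hbdd.mono fun ω h => (h t t).2.1) (hF s t)
  · have := abs_le.1 (abs_sub_le_mul_l1Variation_sub hL hLip (lam := (Λ · ω)) (u := (V · ω))
      (hΛfv ω) (hVfv ω) (μ₀ + M t ω) hst)
    simp only [Pi.sub_apply]
    linarith

/-- **Submartingale property from the proof of Theorem A.5**: let `f(λ, x)` be
continuous, concave in `x` for each fixed `λ`, and `L`-Lipschitz with respect to the
`ℓ¹` metric on `ℝ^m × ℝ^d`. Let `Λ` be adapted with continuous paths of finite
variation, `M` a continuous martingale, `V` adapted with continuous paths of finite
variation, `M(0) = V(0) = 0`, all uniformly controlled by a constant `κ` (almost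
surely `‖Λ(t)‖ ≤ κ`, `‖M(t)‖ ≤ κ`, and the sum of the total variations of the
components of `Λ` and of `V` on `[0, ∞)` is at most `κ`). With
`μ(t) = μ(0) + M(t) + V(t)`, the process
`Z(t) = −f(Λ(t), μ(t)) + L (∑_v TV(Λ_v; [0,t]) + ∑_i TV(V_i; [0,t]))`
is a submartingale. -/
theorem stmt8 {m d : ℕ} (hm : 1 ≤ m) (hd : 1 ≤ d)
    {Ω : Type*} {mΩ : MeasurableSpace Ω} (P : Measure Ω) [IsProbabilityMeasure P]
    (ℱ : Filtration ℝ≥0 mΩ)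
    (f : (Fin m → ℝ) → (Fin d → ℝ) → ℝ)
    (hfc : Continuous fun q : (Fin m → ℝ) × (Fin d → ℝ) => f q.1 q.2)
    (hconc : ∀ lam : Fin m → ℝ, ConcaveOn ℝ Set.univ (f lam))
    (L : ℝ) (hL : 0 ≤ L)
    (hLip : ∀ lam lam' : Fin m → ℝ, ∀ x x' : Fin d → ℝ,
      |f lam x - f lam' x'| ≤
        L * ((∑ v, |lam v - lam' v|) + ∑ i, |x i - x' i|))
    (Λ : ℝ≥0 → Ω → (Fin m → ℝ))
    (hΛadapted : Adapted ℱ Λ)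
    (hΛcont : ∀ ω, Continuous fun t => Λ t ω)
    (hΛfv : ∀ ω v, BoundedVariationOn (fun t => Λ t ω v) Set.univ)
    (M : ℝ≥0 → Ω → (Fin d → ℝ))
    (hM : Martingale M ℱ P)
    (hMcont : ∀ ω, Continuous fun t => M t ω)
    (V : ℝ≥0 → Ω → (Fin d → ℝ))
    (hVadapted : Adapted ℱ V)
    (hVcont : ∀ ω, Continuous fun t => V t ω)
    (hVfv : ∀ ω i, BoundedVariationOn (fun t => V t ω i) Set.univ)
    (hM0 : ∀ ω, M 0 ω = 0) (hV0 : ∀ ω, V 0 ω = 0)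
    (κ : ℝ) (hκ : 0 ≤ κ)
    (hbd : ∀ᵐ ω ∂P,
      (∀ t, ‖Λ t ω‖ ≤ κ) ∧ (∀ t, ‖M t ω‖ ≤ κ) ∧
        (∑ v, eVariationOn (fun t => Λ t ω v) Set.univ)
          + (∑ i, eVariationOn (fun t => V t ω i) Set.univ) ≤ ENNReal.ofReal κ)
    (μ₀ : Fin d → ℝ)
    (Z : ℝ≥0 → Ω → ℝ)
    (hZ : ∀ t ω,
      Z t ω = -f (Λ t ω) (μ₀ + M t ω + V t ω)
        + L * ((∑ v, (eVariationOn (fun s => Λ s ω v) (Icc 0 t)).toReal)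
             + ∑ i, (eVariationOn (fun s => V s ω i) (Icc 0 t)).toReal)) :
    Submartingale Z ℱ P :=
  stmt8_general P ℱ f hfc hconc L hL hLip Λ hΛadapted hΛcont hΛfv M hM V hVadapted hVcont hVfv hV0 κ
    hκ hbd μ₀ Z hZ
end
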